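/- arXiv:1202.0189 — 4 statements merged into one kernel-verified Lean document; each statement's English description precedes it below -/
import Mathlib

section
/- Let p be an odd prime, n ≥ 1, and consider the congruence a x² + B x + c ≡ 0 (mod p^n) with p ∤ a. Write Δ = B² − 4ac = p^δ Δ' with p ∤ Δ'. Then the number of solutions x ∈ ℤ/p^n ℤ equals: p^{⌊n/2⌋} if δ ≥ n; 2 p^{δ'} if δ = 2δ' < n and Δ' is a quadratic residue mod p; and 0 otherwise (i.e. if δ < n and either δ is odd or Δ' is a quadratic non-residue mod p). -/
/-!
Since `p ∤ 2a`, completing the square `4a(ax² + Bx + c) = (2ax + B)² - Δ` turns the count into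
the number of square roots of `Δ` modulo `p^n`. A square root of `p²d` modulo `p^(k+2)` is
divisible by `p`, hence of the form `p w` with `w` taken modulo `p^(k+1)` and `w² ≡ d` modulo
`p^k`; so stripping `p²` from both the modulus and `Δ` divides the count by `p`. This leaves three
base cases: `Δ ≡ 0` modulo `p^r` with `r < 2` (the single root `0`), `Δ` a unit (the two roots
`±y` given by Hensel's lemma if `Δ` is a residue, none otherwise), and `Δ = p · unit` modulo
`p^(k+2)` (no root, since `p ∣ y` would force `p² ∣ Δ`).
-/

open Finset

namespace QuadraticCongruence

theorem card_filter_range_mul_of_periodic {m : ℕ} (P : ℕ → Prop) [DecidablePred P]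
    (hP : Function.Periodic P m) (q : ℕ) :
    #{x ∈ range (q * m) | P x} = q * #{x ∈ range m | P x} := by
  simp only [← Nat.count_eq_card_filter_range]
  induction q with
  | zero => simp
  | succ q ih =>
    have hshift (k : ℕ) : P (q * m + k) ↔ P k := by simpa [add_comm] using hP.nat_mul q k
    simp only [add_mul, one_mul, Nat.count_add, ih, hshift]

theorem card_filter_range_eq_card_filter_zmod (m : ℕ) [NeZero m] (P : ZMod m → Prop)
    [DecidablePred P] : #{x ∈ range m | P ((x : ℕ) : ZMod m)} = #{z : ZMod m | P z} := by
  refine card_nbij' (fun x ↦ (x : ZMod m)) ZMod.val ?_ ?_ ?_ ?_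
  · intro x hx
    simp_all
  · intro z hz
    simp_all [ZMod.val_lt]
  · intro x hx
    simp_all [Nat.mod_eq_of_lt]
  · intro z _
    simp

def numSqrts (m : ℕ) (d : ℤ) : ℕ := #{y ∈ range m | (m : ℤ) ∣ ((y : ℕ) : ℤ) ^ 2 - d}

theorem numSqrts_eq_card_zmod (m : ℕ) [NeZero m] (d : ℤ) :
    numSqrts m d = #{y : ZMod m | y ^ 2 = d} := by
  rw [numSqrts, ← card_filter_range_eq_card_filter_zmod]
  congr! 2 with y
  rw [← ZMod.intCast_eq_intCast_iff_dvd_sub, eq_comm]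
  push_cast
  rfl

theorem numSqrts_periodic (m : ℕ) (d : ℤ) :
    Function.Periodic (fun y : ℕ ↦ (m : ℤ) ∣ (y : ℤ) ^ 2 - d) m := by
  intro y
  have : (((y + m : ℕ) : ℤ)) ^ 2 - d = (y ^ 2 - d) + m * (2 * y + m) := by push_cast; ring
  simp only [this, dvd_add_left (dvd_mul_right _ _)]

theorem not_dvd_of_dvd_sq_sub {q y d : ℤ} (h : q ∣ y ^ 2 - d) (hd : ¬ q ∣ d) :
    ¬ q ∣ y :=
  fun hy ↦ hd ((dvd_sub_right (dvd_pow hy two_ne_zero)).mp h)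

theorem eq_pow_padicValInt_mul_div (p : ℕ) (Δ : ℤ) :
    Δ = p ^ padicValInt p Δ * (Δ / p ^ padicValInt p Δ) :=
  (Int.mul_ediv_cancel' (padicValInt_dvd Δ)).symm

section Prime

variable {p : ℕ} [hp : Fact p.Prime]

theorem prime_int : Prime (p : ℤ) := Nat.prime_iff_prime_int.mp hp.out

theorem numSqrts_sq_mul (m : ℕ) (d : ℤ) :
    numSqrts (p ^ 2 * m) (p ^ 2 * d) = p * numSqrts m d := by
  have hp0 : (p : ℤ) ^ 2 ≠ 0 := pow_ne_zero _ (Int.natCast_ne_zero.mpr hp.out.ne_zero)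
  have hscale (w : ℕ) : ((p ^ 2 * m : ℕ) : ℤ) ∣ ((p * w : ℕ) : ℤ) ^ 2 - p ^ 2 * d ↔
      (m : ℤ) ∣ (w : ℤ) ^ 2 - d := by
    rw [show ((p * w : ℕ) : ℤ) ^ 2 - p ^ 2 * d = p ^ 2 * ((w : ℤ) ^ 2 - d) by push_cast; ring]
    push_cast
    exact mul_dvd_mul_iff_left hp0
  have hroots :
      {y ∈ range (p ^ 2 * m) | ((p ^ 2 * m : ℕ) : ℤ) ∣ ((y : ℕ) : ℤ) ^ 2 - p ^ 2 * d} =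
      {w ∈ range (p * m) | (m : ℤ) ∣ ((w : ℕ) : ℤ) ^ 2 - d}.map
        ⟨(p * ·), mul_right_injective₀ hp.out.ne_zero⟩ := by
    ext y
    simp only [mem_filter, mem_range, mem_map, Function.Embedding.coeFn_mk]
    constructor
    · rintro ⟨hy, hdvd⟩
      have hmod : (p : ℤ) ^ 2 ∣ ((p ^ 2 * m : ℕ) : ℤ) := by
        push_cast
        exact dvd_mul_right _ _
      have hsq : (p : ℤ) ^ 2 ∣ (y : ℤ) ^ 2 :=
        (dvd_sub_left (dvd_mul_right _ d)).mp (hmod.trans hdvd)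
      obtain ⟨w, rfl⟩ : p ∣ y := Int.natCast_dvd_natCast.mp <|
        (UniqueFactorizationMonoid.pow_dvd_pow_iff_dvd two_ne_zero).mp hsq
      refine ⟨w, ⟨?_, (hscale w).mp hdvd⟩, rfl⟩
      nlinarith [hp.out.pos]
    · rintro ⟨w, ⟨hw, hdvd⟩, rfl⟩
      exact ⟨by nlinarith [hp.out.pos], (hscale w).mpr hdvd⟩
  rw [numSqrts, hroots, card_map, card_filter_range_mul_of_periodic _ (numSqrts_periodic m d),
    numSqrts]

theorem numSqrts_pow_two_mul (j m : ℕ) (d : ℤ) :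
    numSqrts (p ^ (2 * j) * m) (p ^ (2 * j) * d) = p ^ j * numSqrts m d := by
  induction j with
  | zero => simp
  | succ j ih =>
    calc numSqrts (p ^ (2 * (j + 1)) * m) (p ^ (2 * (j + 1)) * d)
        = numSqrts (p ^ 2 * (p ^ (2 * j) * m)) (p ^ 2 * (p ^ (2 * j) * d)) := by
          congr 1 <;> ring
      _ = p ^ (j + 1) * numSqrts m d := by rw [numSqrts_sq_mul, ih, pow_succ', mul_assoc]

theorem numSqrts_pow_of_lt_two {r : ℕ} (hr : r < 2) (e : ℤ) :
    numSqrts (p ^ r) (p ^ r * e) = 1 := by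
  rw [numSqrts, card_eq_one]
  refine ⟨0, ?_⟩
  ext y
  simp only [mem_filter, mem_range, mem_singleton, Nat.cast_pow]
  constructor
  · rintro ⟨hy, hdvd⟩
    have hsq : (p : ℤ) ^ r ∣ (y : ℤ) ^ 2 := (dvd_sub_left (dvd_mul_right _ e)).mp hdvd
    interval_cases r
    · simpa using hy
    · refine Nat.eq_zero_of_dvd_of_lt ?_ (by simpa using hy)
      exact Int.natCast_dvd_natCast.mp (prime_int.dvd_of_dvd_pow (by simpa using hsq))
  · rintro rfl
    simp [hp.out.pos]

theorem numSqrts_of_pow_dvd (k : ℕ) {d : ℤ} (hd : (p : ℤ) ^ k ∣ d) :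
    numSqrts (p ^ k) d = p ^ (k / 2) := by
  obtain ⟨e, rfl⟩ := hd
  have hk : k = 2 * (k / 2) + k % 2 := (Nat.div_add_mod k 2).symm
  rw [hk, pow_add, pow_add, mul_assoc, numSqrts_pow_two_mul,
    numSqrts_pow_of_lt_two (Nat.mod_lt k two_pos), mul_one, ← hk]

theorem numSqrts_pow_add_two_mul_eq_zero (k : ℕ) {d : ℤ} (hd : ¬ (p : ℤ) ∣ d) :
    numSqrts (p ^ (k + 2)) (p * d) = 0 := by
  rw [numSqrts, card_eq_zero, filter_eq_empty_iff]
  intro y _ hdvd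
  push_cast at hdvd
  have hsq : (p : ℤ) ^ 2 ∣ (y : ℤ) ^ 2 - p * d := (pow_dvd_pow _ (by omega)).trans hdvd
  have hy : (p : ℤ) ∣ y := prime_int.dvd_of_dvd_pow <|
    (dvd_sub_left (dvd_mul_right _ d)).mp ((dvd_pow_self _ two_ne_zero).trans hsq)
  have hpd : (p : ℤ) * p ∣ p * d := by
    rw [← sq]
    simpa using (dvd_sub_right (pow_dvd_pow_of_dvd hy 2)).mp hsq
  exact hd ((mul_dvd_mul_iff_left (Int.natCast_ne_zero.mpr hp.out.ne_zero)).mp hpd)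

theorem not_dvd_two_mul (hp2 : p ≠ 2) {z : ℤ} (hz : ¬ (p : ℤ) ∣ z) :
    ¬ (p : ℤ) ∣ 2 * z := by
  intro h
  rcases prime_int.dvd_mul.mp h with h2 | h2
  · exact hp2 ((Nat.prime_dvd_prime_iff_eq hp.out Nat.prime_two).mp (by exact_mod_cast h2))
  · exact hz h2

theorem numSqrts_eq_zero_of_not_isSquare {k : ℕ} (hk : k ≠ 0) {d : ℤ}
    (hsq : ¬ IsSquare (d : ZMod p)) : numSqrts (p ^ k) d = 0 := by
  rw [numSqrts, card_eq_zero, filter_eq_empty_iff]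
  intro y _ hdvd
  push_cast at hdvd
  refine hsq ⟨y, ?_⟩
  rw [← sq, ← Int.cast_natCast, ← Int.cast_pow, ZMod.intCast_eq_intCast_iff_dvd_sub]
  exact (dvd_pow_self _ hk).trans hdvd

theorem exists_sq_sub_dvd_pow (hp2 : p ≠ 2) {d : ℤ} (hd : ¬ (p : ℤ) ∣ d)
    (hsq : IsSquare (d : ZMod p)) (k : ℕ) : ∃ y : ℤ, (p : ℤ) ^ (k + 1) ∣ y ^ 2 - d := by
  induction k with
  | zero =>
    obtain ⟨r, hr⟩ := hsq
    obtain ⟨y, rfl⟩ := ZMod.intCast_surjective r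
    refine ⟨y, ?_⟩
    rw [zero_add, pow_one, ← ZMod.intCast_eq_intCast_iff_dvd_sub, hr, Int.cast_pow, sq]
  | succ k ih =>
    obtain ⟨y, t, ht⟩ := ih
    have hy : ¬ (p : ℤ) ∣ y := not_dvd_of_dvd_sq_sub
      (by rw [ht]; exact dvd_mul_of_dvd_left (dvd_pow_self _ k.succ_ne_zero) t) hd
    obtain ⟨u, v, huv⟩ := (prime_int.coprime_iff_not_dvd).mpr (not_dvd_two_mul hp2 hy)
    refine ⟨y - p ^ (k + 1) * t * v, t * u + p ^ k * t ^ 2 * v ^ 2, ?_⟩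
    linear_combination ht - (p : ℤ) ^ (k + 1) * t * huv

theorem dvd_sub_or_dvd_add_of_dvd_sq_sub_sq (hp2 : p ≠ 2) {k : ℕ} {y z : ℤ}
    (hz : ¬ (p : ℤ) ∣ z) (h : (p : ℤ) ^ k ∣ y ^ 2 - z ^ 2) :
    (p : ℤ) ^ k ∣ y - z ∨ (p : ℤ) ^ k ∣ y + z := by
  rw [sq_sub_sq] at h
  have hsum : (y + z) - (y - z) = 2 * z := by ring
  by_cases hsub : (p : ℤ) ∣ y - z
  · have hadd : ¬ (p : ℤ) ∣ y + z := fun hadd ↦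
      not_dvd_two_mul hp2 hz (hsum ▸ dvd_sub hadd hsub)
    exact .inl ((prime_int.coprime_iff_not_dvd.mpr hadd).pow_left.dvd_of_dvd_mul_left h)
  · exact .inr ((prime_int.coprime_iff_not_dvd.mpr hsub).pow_left.dvd_of_dvd_mul_right h)

theorem card_sq_eq_sq (hp2 : p ≠ 2) {k : ℕ} (hk : k ≠ 0) {z : ℤ} (hz : ¬ (p : ℤ) ∣ z) :
    #{y : ZMod (p ^ k) | y ^ 2 = (z : ZMod (p ^ k)) ^ 2} = 2 := by
  have hcast (a b : ℤ) : (a : ZMod (p ^ k)) = b ↔ (p : ℤ) ^ k ∣ a - b := by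
    rw [← sub_eq_zero, ← Int.cast_sub, ZMod.intCast_zmod_eq_zero_iff_dvd, Nat.cast_pow]
  rw [card_eq_two]
  refine ⟨z, -z, fun h ↦ ?_, ?_⟩
  · refine not_dvd_two_mul hp2 hz ((dvd_pow_self _ hk).trans ?_)
    simpa using (hcast (2 * z) 0).mp (by push_cast; linear_combination h)
  · ext y
    obtain ⟨y, rfl⟩ := ZMod.intCast_surjective y
    simp only [mem_filter, mem_univ, true_and, mem_insert, mem_singleton]
    rw [← Int.cast_pow, ← Int.cast_pow, hcast, ← Int.cast_neg, hcast, hcast, sub_neg_eq_add]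
    constructor
    · exact dvd_sub_or_dvd_add_of_dvd_sq_sub_sq hp2 hz
    · rintro (h | h)
      · exact (sq_sub_sq y z ▸ dvd_mul_of_dvd_right h _)
      · exact (sq_sub_sq y z ▸ dvd_mul_of_dvd_left h _)

theorem numSqrts_eq_two_of_isSquare (hp2 : p ≠ 2) {k : ℕ} (hk : k ≠ 0) {d : ℤ}
    (hd : ¬ (p : ℤ) ∣ d) (hsq : IsSquare (d : ZMod p)) : numSqrts (p ^ k) d = 2 := by
  obtain ⟨k, rfl⟩ := Nat.exists_eq_succ_of_ne_zero hk
  obtain ⟨z, hz⟩ := exists_sq_sub_dvd_pow hp2 hd hsq k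
  have hdz : (d : ZMod (p ^ (k + 1))) = (z : ZMod (p ^ (k + 1))) ^ 2 := by
    rw [← Int.cast_pow, ZMod.intCast_eq_intCast_iff_dvd_sub]
    exact_mod_cast hz
  rw [numSqrts_eq_card_zmod, hdz, card_sq_eq_sq hp2 k.succ_ne_zero
    (not_dvd_of_dvd_sq_sub ((dvd_pow_self _ k.succ_ne_zero).trans hz) hd)]

theorem numSqrts_pow_two_mul_of_legendreSym_eq_one (hp2 : p ≠ 2) {j k : ℕ} (hjk : 2 * j < k)
    {d : ℤ} (hd : ¬ (p : ℤ) ∣ d) (hleg : legendreSym p d = 1) :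
    numSqrts (p ^ k) (p ^ (2 * j) * d) = 2 * p ^ j := by
  have hsq : IsSquare (d : ZMod p) :=
    (legendreSym.eq_one_iff p (by rwa [Ne, ZMod.intCast_zmod_eq_zero_iff_dvd])).mp hleg
  obtain ⟨r, rfl⟩ := Nat.exists_eq_add_of_lt hjk
  rw [add_assoc, pow_add, numSqrts_pow_two_mul,
    numSqrts_eq_two_of_isSquare hp2 r.succ_ne_zero hd hsq, mul_comm]

theorem numSqrts_pow_mul_eq_zero {δ k : ℕ} (hδk : δ < k) {d : ℤ} (hd : ¬ (p : ℤ) ∣ d)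
    (h : Odd δ ∨ legendreSym p d = -1) : numSqrts (p ^ k) (p ^ δ * d) = 0 := by
  obtain ⟨r, rfl⟩ := Nat.exists_eq_add_of_lt hδk
  rcases Nat.even_or_odd' δ with ⟨j, rfl | rfl⟩
  · have hsq : ¬ IsSquare (d : ZMod p) :=
      (legendreSym.eq_neg_one_iff p).mp (h.resolve_left (by simp))
    rw [add_assoc, pow_add, numSqrts_pow_two_mul,
      numSqrts_eq_zero_of_not_isSquare r.succ_ne_zero hsq, mul_zero]
  · rw [show 2 * j + 1 + r + 1 = 2 * j + (r + 2) by ring, pow_add, pow_succ (p : ℤ), mul_assoc,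
      numSqrts_pow_two_mul, numSqrts_pow_add_two_mul_eq_zero r hd, mul_zero]

theorem not_dvd_div_pow_padicValInt {Δ : ℤ} (hΔ : Δ ≠ 0) :
    ¬ (p : ℤ) ∣ Δ / p ^ padicValInt p Δ := by
  rintro ⟨e, he⟩
  have hdvd : (p : ℤ) ^ (padicValInt p Δ + 1) ∣ Δ :=
    ⟨e, by rw [pow_succ, mul_assoc, ← he]; exact eq_pow_padicValInt_mul_div p Δ⟩
  rcases (padicValInt_dvd_iff _ Δ).mp hdvd with h | h
  · exact hΔ h
  · omega

end Prime

theorem card_roots_quadratic_eq_numSqrts {m : ℕ} [NeZero m] {a B c : ℤ}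
    (h : IsCoprime (2 * a) m) :
    #{x ∈ range m | (m : ℤ) ∣ a * ((x : ℕ) : ℤ) ^ 2 + B * (x : ℤ) + c} =
      numSqrts m (B ^ 2 - 4 * a * c) := by
  obtain ⟨u, v, huv⟩ := h
  have hu : (u : ZMod m) * (2 * a) = 1 := by
    have := congrArg (Int.cast : ℤ → ZMod m) huv
    push_cast at this
    simpa using this
  have hcast (t : ℤ) : (m : ℤ) ∣ t ↔ (t : ZMod m) = 0 :=
    (ZMod.intCast_zmod_eq_zero_iff_dvd t m).symm
  simp only [hcast]
  push_cast
  rw [card_filter_range_eq_card_filter_zmod m (fun z ↦ (a : ZMod m) * z ^ 2 + B * z + c = 0),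
    numSqrts_eq_card_zmod]
  push_cast
  refine card_nbij' (fun z ↦ 2 * a * z + B) (fun y ↦ u * (y - B)) ?_ ?_ ?_ ?_
  · intro z hz
    simp only [mem_coe, mem_filter, mem_univ, true_and] at hz ⊢
    linear_combination (4 * (a : ZMod m)) * hz
  · intro y hy
    simp only [mem_coe, mem_filter, mem_univ, true_and] at hy ⊢
    -- `u` inverts `2a`, so multiplying by `a u²` cancels the factor `4a`
    set X := (a : ZMod m) * (u * (y - B)) ^ 2 + B * (u * (y - B)) + c
    have hlin : 2 * a * (u * (y - B)) + B - y = 0 := by linear_combination (y - B) * hu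
    have h4 : 4 * a * X = 0 := by linear_combination (2 * a * (u * (y - B)) + B + y) * hlin + hy
    linear_combination (u ^ 2 * a) * h4 - X * (u * 2 * a + 1) * hu
  · intro z _
    linear_combination z * hu
  · intro y _
    linear_combination (y - B) * hu

end QuadraticCongruence

open QuadraticCongruence in
theorem quadratic_congruence_count_general (p : ℕ) [hp : Fact p.Prime] (hp2 : p ≠ 2)
    (n : ℕ) (a B c : ℤ) (ha : ¬ (p : ℤ) ∣ a)
    (Δ : ℤ) (hΔ : Δ = B ^ 2 - 4 * a * c)
    (M : ℕ)
    (hM : M = ((Finset.range (p ^ n)).filter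
        (fun x : ℕ => (p : ℤ) ^ n ∣ a * (x : ℤ) ^ 2 + B * (x : ℤ) + c)).card) :
    ((Δ = 0 ∨ n ≤ padicValInt p Δ) → M = p ^ (n / 2)) ∧
    (∀ δ' : ℕ, Δ ≠ 0 → padicValInt p Δ = 2 * δ' → 2 * δ' < n →
        legendreSym p (Δ / (p : ℤ) ^ (2 * δ')) = 1 → M = 2 * p ^ δ') ∧
    (Δ ≠ 0 → padicValInt p Δ < n →
        (Odd (padicValInt p Δ) ∨ legendreSym p (Δ / (p : ℤ) ^ padicValInt p Δ) = -1) →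
        M = 0) := by
  have hcop : IsCoprime (2 * a) ((p ^ n : ℕ) : ℤ) := by
    rw [Nat.cast_pow]
    exact (prime_int.coprime_iff_not_dvd.mpr (not_dvd_two_mul hp2 ha)).pow_left.symm
  have hMΔ : M = numSqrts (p ^ n) Δ := by
    rw [hM, hΔ, ← card_roots_quadratic_eq_numSqrts hcop, Nat.cast_pow]
  refine ⟨fun hdvd ↦ ?_, fun δ' hΔ0 hv hlt hleg ↦ ?_, fun hΔ0 hlt hcase ↦ ?_⟩
  · rw [hMΔ, numSqrts_of_pow_dvd n ((padicValInt_dvd_iff n Δ).mpr hdvd)]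
  · have hd := not_dvd_div_pow_padicValInt (p := p) hΔ0
    rw [hv] at hd
    rw [hMΔ, eq_pow_padicValInt_mul_div p Δ, hv]
    exact numSqrts_pow_two_mul_of_legendreSym_eq_one hp2 hlt hd hleg
  · rw [hMΔ, eq_pow_padicValInt_mul_div p Δ]
    exact numSqrts_pow_mul_eq_zero hlt (not_dvd_div_pow_padicValInt hΔ0) hcase

/-- Counting solutions of the quadratic congruence `a x² + B x + c ≡ 0 (mod p^n)`
for an odd prime `p` with `p ∤ a`, in terms of `δ = ord_p(Δ)` and the Legendre
symbol of `Δ' = Δ/p^δ`. -/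
theorem quadratic_congruence_count (p : ℕ) [hp : Fact p.Prime] (hp2 : p ≠ 2)
    (n : ℕ) (hn : 1 ≤ n) (a B c : ℤ) (ha : ¬ (p : ℤ) ∣ a)
    (Δ : ℤ) (hΔ : Δ = B ^ 2 - 4 * a * c)
    (M : ℕ)
    (hM : M = ((Finset.range (p ^ n)).filter
        (fun x : ℕ => (p : ℤ) ^ n ∣ a * (x : ℤ) ^ 2 + B * (x : ℤ) + c)).card) :
    ((Δ = 0 ∨ n ≤ padicValInt p Δ) → M = p ^ (n / 2)) ∧
    (∀ δ' : ℕ, Δ ≠ 0 → padicValInt p Δ = 2 * δ' → 2 * δ' < n →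
        legendreSym p (Δ / (p : ℤ) ^ (2 * δ')) = 1 → M = 2 * p ^ δ') ∧
    (Δ ≠ 0 → padicValInt p Δ < n →
        (Odd (padicValInt p Δ) ∨ legendreSym p (Δ / (p : ℤ) ^ padicValInt p Δ) = -1) →
        M = 0) :=
  quadratic_congruence_count_general p (hp := hp) hp2 n a B c ha Δ hΔ M hM
end

section
/- K_fin = SL₂(ℤ) · K₁(N): every element of GL₂(Ẑ) can be written as a product of an element of SL₂(ℤ) (embedded diagonally) and an element of K₁(N), where K₁(N) = {(a b; c d) ∈ GL₂(Ẑ) : c ≡ 0, d ≡ 1 mod N·Ẑ}. -/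
instance factPrimeOfPrimes (p : Nat.Primes) : Fact (Nat.Prime (p : ℕ)) := ⟨p.2⟩

/-- The profinite completion `Ẑ = ∏_p ℤ_p` of `ℤ`. -/
abbrev Zhat : Type := ∀ p : Nat.Primes, PadicInt (p : ℕ)

/-!
Reduction modulo `N` is a ring map `Ẑ → ℤ/N` with kernel `N Ẑ`: by the Chinese remainder
theorem it is assembled from the maps `ℤ_p → ℤ/p^{v_p(N)}`, and `N` is `p^{v_p(N)}` times a unit
of `ℤ_p`. Modulo `N`, `k` factors as `S · diag(det k, 1)` with `S ∈ SL₂(ℤ/N)`, and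
`SL₂(ℤ) → SL₂(ℤ/N)` is onto: lift the bottom row of `S` to integers `(c, d)` with `c ≠ 0`, make
them coprime by adding to `d` the product of `N` and the primes dividing `c` but not `d`,
complete `(c, d)` to an element of `SL₂(ℤ)` and correct by a power of `T = (1 1; 0 1)`.
If `γ ∈ SL₂(ℤ)` lifts `S`, then `u = γ⁻¹ k` reduces to `diag(det k, 1)`, so it lies in `K₁(N)`.
-/

open Matrix MatrixGroups

theorem Int.exists_isCoprime_add_mul {n : ℕ} {a b : ℤ} (ha : a ≠ 0)
    (h : IsCoprime (a : ZMod n) (b : ZMod n)) : ∃ k : ℤ, IsCoprime a (b + k * n) := by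
  let k : ℤ := ∏ p ∈ ({p ∈ a.natAbs.primeFactors | ¬ (p : ℤ) ∣ b} : Finset ℕ), (p : ℤ)
  refine ⟨k, isCoprime_of_prime_dvd (fun h0 => ha h0.1) fun z hz hza hzd => ?_⟩
  set p := z.natAbs
  have hp : p.Prime := Int.prime_iff_natAbs_prime.mp hz
  have hp' : Prime (p : ℤ) := Nat.prime_iff_prime_int.mp hp
  have hpa : (p : ℤ) ∣ a := Int.natAbs_dvd.mpr hza
  have hpd : (p : ℤ) ∣ b + k * n := Int.natAbs_dvd.mpr hzd
  have hpk : (p : ℤ) ∣ k ↔ ¬ (p : ℤ) ∣ b := by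
    constructor
    · intro hdvd
      obtain ⟨q, hq, hpq⟩ := hp'.dvd_finsetProd_iff _ |>.mp hdvd
      rw [Finset.mem_filter, Nat.mem_primeFactors] at hq
      rw [Int.natCast_dvd_natCast, Nat.prime_dvd_prime_iff_eq hp hq.1.1] at hpq
      exact hpq ▸ hq.2
    · intro hpb
      exact Finset.dvd_prod_of_mem _ (Finset.mem_filter.mpr
        ⟨Nat.mem_primeFactors.mpr ⟨hp, Int.natCast_dvd.mp hpa, Int.natAbs_ne_zero.mpr ha⟩, hpb⟩)
  by_cases hpb : (p : ℤ) ∣ b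
  · rcases hp'.dvd_or_dvd ((dvd_add_right hpb).mp hpd) with hk | hn
    · exact hpk.mp hk hpb
    · have : Fact p.Prime := ⟨hp⟩
      have hmod := h.map (ZMod.castHom (Int.natCast_dvd_natCast.mp hn) (ZMod p))
      rw [map_intCast, map_intCast, (ZMod.intCast_zmod_eq_zero_iff_dvd _ p).mpr hpa,
        (ZMod.intCast_zmod_eq_zero_iff_dvd _ p).mpr hpb, isCoprime_zero_left] at hmod
      exact not_isUnit_zero hmod
  · exact hpb ((dvd_add_left ((hpk.mpr hpb).mul_right _)).mp hpd)

theorem ZMod.exists_isCoprime_intCast_eq {N : ℕ} [NeZero N] {x y : ZMod N}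
    (h : IsCoprime x y) : ∃ c d : ℤ, IsCoprime c d ∧ (c : ZMod N) = x ∧ (d : ZMod N) = y := by
  have hc : ((x.val + N : ℕ) : ℤ) ≠ 0 := by have := NeZero.ne N; omega
  have hx : (((x.val + N : ℕ) : ℤ) : ZMod N) = x := by simp
  have hy : ((y.val : ℤ) : ZMod N) = y := by simp
  obtain ⟨k, hk⟩ := Int.exists_isCoprime_add_mul (n := N) hc (hx ▸ hy ▸ h)
  exact ⟨_, _, hk, hx, by simp⟩

namespace Matrix.SpecialLinearGroup

theorem exists_map_T_zpow_eq {N : ℕ} (T : SL(2, ZMod N)) (h10 : T 1 0 = 0) (h11 : T 1 1 = 1) :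
    ∃ t : ℤ, map (Int.castRingHom (ZMod N)) (ModularGroup.T ^ t) = T := by
  have h00 : T 0 0 = 1 := by
    have hdet := T.det_coe
    rwa [det_fin_two, h10, h11, mul_one, mul_zero, sub_zero] at hdet
  refine ⟨(T 0 1).cast, ?_⟩
  ext i j
  rw [map_apply_coe, RingHom.mapMatrix_apply, ModularGroup.coe_T_zpow]
  fin_cases i <;> fin_cases j <;> simp [h00, h10, h11]

theorem map_intCast_surjective (N : ℕ) [NeZero N] :
    Function.Surjective (map (Int.castRingHom (ZMod N)) : SL(2, ℤ) →* SL(2, ZMod N)) := by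
  intro S
  obtain ⟨c, d, hcd, hc, hd⟩ :=
    ZMod.exists_isCoprime_intCast_eq (ModularGroup.bottom_row_coprime S)
  obtain ⟨g, -, hg⟩ := ModularGroup.bottom_row_surj (R := ℤ) (show ![c, d] ∈ _ from hcd)
  have hg10 : g 1 0 = c := congrFun hg 0
  have hg11 : g 1 1 = d := congrFun hg 1
  have hdet : ((g 0 0 * d - g 0 1 * c : ℤ) : ZMod N) = 1 := by
    rw [← hg10, ← hg11, ← det_fin_two, g.det_coe, Int.cast_one]
  set T := S * (map (Int.castRingHom (ZMod N)) g)⁻¹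
  have hT : T 1 0 = 0 ∧ T 1 1 = 1 := by
    simp only [T, coe_mul, coe_inv, map_apply_coe, RingHom.mapMatrix_apply, Int.coe_castRingHom,
      adjugate_fin_two, map_apply, hg11, hg10, mul_apply, of_apply, cons_val', cons_val_zero,
      cons_val_one, cons_val_fin_one, Fin.sum_univ_two, ← hc, ← hd]
    push_cast at hdet
    exact ⟨by ring, by linear_combination hdet⟩
  obtain ⟨t, ht⟩ := exists_map_T_zpow_eq T hT.1 hT.2
  exact ⟨ModularGroup.T ^ t * g, by rw [map_mul, ht, inv_mul_cancel_right]⟩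

end Matrix.SpecialLinearGroup

theorem exists_eq_SL2Z_mul_of_ringHom_zmod {R : Type*} [CommRing R] {N : ℕ} [NeZero N]
    (φ : R →+* ZMod N) (k : Matrix (Fin 2) (Fin 2) R) (hk : IsUnit k.det) :
    ∃ (γ : SL(2, ℤ)) (u : Matrix (Fin 2) (Fin 2) R), IsUnit u.det ∧ φ (u 1 0) = 0 ∧
      φ (u 1 1) = 1 ∧ k = (γ : Matrix (Fin 2) (Fin 2) ℤ).map (Int.cast : ℤ → R) * u := by
  obtain ⟨δ, hδ⟩ := hk.map φ
  let D : Matrix (Fin 2) (Fin 2) (ZMod N) := diagonal ![(δ : ZMod N), 1]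
  let D' : Matrix (Fin 2) (Fin 2) (ZMod N) := diagonal ![((δ⁻¹ : (ZMod N)ˣ) : ZMod N), 1]
  let S : SL(2, ZMod N) := ⟨k.map φ * D', by
    rw [det_mul, ← RingHom.mapMatrix_apply, ← RingHom.map_det, ← hδ]; simp [D']⟩
  have hkS : k.map φ = S * D := by
    rw [show (S : Matrix _ _ _) = k.map φ * D' from rfl, Matrix.mul_assoc,
      show D' * D = 1 by simp [D, D', diagonal_mul_diagonal, ← diagonal_one], Matrix.mul_one]
  obtain ⟨γ, hγ⟩ := Matrix.SpecialLinearGroup.map_intCast_surjective N S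
  set γR := Matrix.SpecialLinearGroup.map (Int.castRingHom R) γ
  let u := ((γR⁻¹ : SL(2, R)) : Matrix (Fin 2) (Fin 2) R) * k
  have hu : u.map φ = D := by
    have hmap : ((γR⁻¹ : SL(2, R)) : Matrix (Fin 2) (Fin 2) R).map φ =
        ((S⁻¹ : SL(2, ZMod N)) : Matrix (Fin 2) (Fin 2) (ZMod N)) := by
      rw [← hγ, ← map_inv, ← map_inv]
      ext i j
      simp only [Matrix.SpecialLinearGroup.map_apply_coe, RingHom.mapMatrix_apply, map_apply,
        Int.coe_castRingHom, map_intCast]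
    rw [Matrix.map_mul (f := φ), hmap, hkS, ← Matrix.mul_assoc,
      ← Matrix.SpecialLinearGroup.coe_mul, inv_mul_cancel, Matrix.SpecialLinearGroup.coe_one,
      Matrix.one_mul]
  refine ⟨γ, u, ?_, ?_, ?_, ?_⟩
  · rwa [det_mul, Matrix.SpecialLinearGroup.det_coe, one_mul]
  · simpa [D] using congrFun (congrFun hu 1) 0
  · simpa [D] using congrFun (congrFun hu 1) 1
  · rw [← Matrix.mul_assoc,
      show (γ : Matrix (Fin 2) (Fin 2) ℤ).map (Int.cast : ℤ → R) = γR from rfl,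
      ← Matrix.SpecialLinearGroup.coe_mul, mul_inv_cancel, Matrix.SpecialLinearGroup.coe_one,
      Matrix.one_mul]

theorem PadicInt.natCast_dvd_iff_pow_dvd {p : ℕ} [hp : Fact p.Prime] {N : ℕ} (hN : N ≠ 0)
    {x : ℤ_[p]} : (N : ℤ_[p]) ∣ x ↔ (p : ℤ_[p]) ^ N.factorization p ∣ x := by
  have hunit : IsUnit ((ordCompl[p] N : ℕ) : ℤ_[p]) := by
    rw [PadicInt.isUnit_iff, PadicInt.norm_natCast_eq_one_iff]
    exact (Nat.Prime.coprime_iff_not_dvd hp.out).2 (Nat.not_dvd_ordCompl hp.out hN)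
  have hassoc := associated_mul_unit_right ((p : ℤ_[p]) ^ N.factorization p) _ hunit
  rw [← Nat.cast_pow, ← Nat.cast_mul, Nat.ordProj_mul_ordCompl_eq_self] at hassoc
  rw [← hassoc.dvd_iff_dvd_left, Nat.cast_pow]

namespace Zhat

noncomputable def toZMod (N : ℕ) [NeZero N] : Zhat →+* ZMod N :=
  (ZMod.equivPi N (NeZero.ne N)).symm.toRingHom.comp <| RingHom.pi fun p =>
    let q : Nat.Primes := ⟨p, Nat.prime_of_mem_primeFactors p.2⟩
    (PadicInt.toZModPow (p := q) (N.factorization q)).comp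
      (Pi.evalRingHom (fun q : Nat.Primes => ℤ_[q]) q)

theorem toZMod_eq_zero_iff {N : ℕ} [NeZero N] {x : Zhat} : toZMod N x = 0 ↔ (N : Zhat) ∣ x := by
  constructor
  · intro h
    have hψ := (map_eq_zero_iff _ (ZMod.equivPi N (NeZero.ne N)).symm.injective).mp h
    have hdvd : ∀ q : Nat.Primes, (N : ℤ_[q]) ∣ x q := by
      intro q
      rw [PadicInt.natCast_dvd_iff_pow_dvd (NeZero.ne N)]
      by_cases hq : (q : ℕ) ∈ N.primeFactors
      · have hq0 := congrFun hψ ⟨q, hq⟩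
        rw [← Ideal.mem_span_singleton, ← PadicInt.ker_toZModPow]
        exact hq0
      · rw [Nat.factorization_eq_zero_of_not_dvd, pow_zero]
        · exact one_dvd _
        · exact fun hqN => hq (Nat.mem_primeFactors.mpr ⟨q.2, hqN, NeZero.ne N⟩)
    choose y hy using hdvd
    exact ⟨y, funext hy⟩
  · rintro ⟨y, rfl⟩
    rw [map_mul, map_natCast, ZMod.natCast_self, zero_mul]

end Zhat

/-- `K_fin = SL₂(ℤ)·K₁(N)`: every element of `GL₂(Ẑ)` is the product of an element of
`SL₂(ℤ)` (embedded diagonally) and an element of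
`K₁(N) = {(a b; c d) ∈ GL₂(Ẑ) : c ≡ 0, d ≡ 1 mod N·Ẑ}`. -/
theorem GL2Zhat_eq_SL2Z_mul_K1 (N : ℕ) (hN : 0 < N)
    (k : Matrix (Fin 2) (Fin 2) Zhat) (hk : IsUnit k.det) :
    ∃ (γ : Matrix.SpecialLinearGroup (Fin 2) ℤ) (u : Matrix (Fin 2) (Fin 2) Zhat),
      IsUnit u.det ∧ (N : Zhat) ∣ u 1 0 ∧ (N : Zhat) ∣ (u 1 1 - 1) ∧
      k = ((γ : Matrix (Fin 2) (Fin 2) ℤ).map (Int.cast : ℤ → Zhat)) * u := by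
  have : NeZero N := ⟨hN.ne'⟩
  obtain ⟨γ, u, hu, h10, h11, rfl⟩ := exists_eq_SL2Z_mul_of_ringHom_zmod (Zhat.toZMod N) k hk
  refine ⟨γ, u, hu, Zhat.toZMod_eq_zero_iff.mp h10, Zhat.toZMod_eq_zero_iff.mp ?_, rfl⟩
  rw [map_sub, h11, map_one, sub_self]
end

section
/- Let χ be a multiplicative function on ℤ/(qr)ℤ with q, r coprime, factoring as χ = χ_q · χ_r via the Chinese remainder theorem. Then the generalized Kloosterman sum factors: S_χ(a, b; n; qr) = S_{χ_q}(a·r̄, b·r̄; n; q) · S_{χ_r}(a·q̄, b·q̄; n; r), where r̄·r ≡ 1 mod q and q̄·q ≡ 1 mod r. -/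
open Finset

instance neZeroMulNat {q r : ℕ} [NeZero q] [NeZero r] : NeZero (q * r) :=
  ⟨mul_ne_zero (NeZero.ne q) (NeZero.ne r)⟩

/-- The generalized twisted Kloosterman sum
`S_χ(a,b;n;c) = ∑_{x x' = n in ℤ/cℤ} \overline{χ(x)} e((a x + b x')/c)`. -/
noncomputable def klSum (c : ℕ) [NeZero c] (χ : ZMod c → ℂ) (a b n : ℤ) : ℂ :=
  ∑ x : ZMod c, ∑ x' : ZMod c,
    if x * x' = (n : ZMod c) then
      (starRingEnd ℂ) (χ x) *
        Complex.exp (2 * Real.pi * Complex.I * ((a : ℂ) * x.val + (b : ℂ) * x'.val) / c)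
    else 0

noncomputable def eC (c : ℕ) (m : ℤ) : ℂ :=
  Complex.exp (2 * Real.pi * Complex.I * m / c)

lemma eC_add (c : ℕ) (m m' : ℤ) : eC c (m + m') = eC c m * eC c m' := by
  rw [eC, eC, eC, ← Complex.exp_add]
  congr 1
  push_cast
  ring

lemma eC_cmul (c : ℕ) [NeZero c] (t : ℤ) : eC c ((c : ℤ) * t) = 1 := by
  have hc : (c : ℂ) ≠ 0 := Nat.cast_ne_zero.mpr (NeZero.ne c)
  rw [eC]
  have : (2 * (Real.pi : ℂ) * Complex.I * (((c : ℤ) * t : ℤ) : ℂ) / c)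
      = (t : ℂ) * (2 * Real.pi * Complex.I) := by
    push_cast
    field_simp
  rw [this, Complex.exp_int_mul_two_pi_mul_I]

lemma eC_congr (c : ℕ) [NeZero c] {m m' : ℤ} (h : (m : ZMod c) = (m' : ZMod c)) :
    eC c m = eC c m' := by
  obtain ⟨t, ht⟩ := ((ZMod.intCast_eq_intCast_iff m m' c).mp h).dvd
  have : m' = m + (c : ℤ) * t := by linarith
  rw [this, eC_add, eC_cmul, mul_one]

lemma eC_scale (q r : ℕ) [NeZero q] [NeZero r] (m : ℤ) :
    eC (q * r) ((r : ℤ) * m) = eC q m := by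
  have hq : (q : ℂ) ≠ 0 := Nat.cast_ne_zero.mpr (NeZero.ne q)
  have hr : (r : ℂ) ≠ 0 := Nat.cast_ne_zero.mpr (NeZero.ne r)
  rw [eC, eC]
  congr 1
  push_cast
  field_simp

lemma eC_split (q r : ℕ) [NeZero q] [NeZero r] (hqr : Nat.Coprime q r)
    (rb qb : ℤ) (hrb : (r : ℤ) * rb ≡ 1 [ZMOD (q : ℤ)])
    (hqb : (q : ℤ) * qb ≡ 1 [ZMOD (r : ℤ)]) (m : ℤ) :
    eC (q * r) m = eC q (rb * m) * eC r (qb * m) := by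
  have h1 : eC q (rb * m) = eC (q * r) ((r : ℤ) * (rb * m)) := (eC_scale q r _).symm
  have h2 : eC r (qb * m) = eC (q * r) ((q : ℤ) * (qb * m)) := by
    rw [mul_comm q r]; exact (eC_scale r q _).symm
  rw [h1, h2, ← eC_add]
  apply eC_congr
  rw [ZMod.intCast_eq_intCast_iff]
  have hco : (q : ℤ).natAbs.Coprime (r : ℤ).natAbs := by simpa using hqr
  have hqrc : ((q * r : ℕ) : ℤ) = (q : ℤ) * (r : ℤ) := by push_cast; ring
  rw [hqrc, ← Int.modEq_and_modEq_iff_modEq_mul hco]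
  constructor
  · calc m = 1 * m + 0 := by ring
    _ ≡ ((r : ℤ) * rb) * m + (q : ℤ) * (qb * m) [ZMOD (q : ℤ)] := by
        exact (hrb.symm.mul_right m).add ((Int.modEq_zero_iff_dvd.mpr ⟨qb * m, rfl⟩).symm)
    _ = (r : ℤ) * (rb * m) + (q : ℤ) * (qb * m) := by ring
  · calc m = 0 + 1 * m := by ring
    _ ≡ (r : ℤ) * (rb * m) + ((q : ℤ) * qb) * m [ZMOD (r : ℤ)] := by
        exact ((Int.modEq_zero_iff_dvd.mpr ⟨rb * m, rfl⟩).symm).add (hqb.symm.mul_right m)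
    _ = (r : ℤ) * (rb * m) + (q : ℤ) * (qb * m) := by ring

lemma klSum_eq (c : ℕ) [NeZero c] (χ : ZMod c → ℂ) (a b n : ℤ) :
    klSum c χ a b n = ∑ x : ZMod c, ∑ x' : ZMod c,
      if x * x' = (n : ZMod c) then
        (starRingEnd ℂ) (χ x) * eC c (a * (x.val : ℤ) + b * (x'.val : ℤ))
      else 0 := by
  unfold klSum eC
  refine Finset.sum_congr rfl fun x _ => Finset.sum_congr rfl fun x' _ => ?_
  split
  · congr 2
    push_cast
    ring
  · rfl

/-- CRT factorization of the generalized Kloosterman sum: if `χ = χ_q · χ_r` via the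
Chinese remainder theorem with `gcd(q,r)=1`, then
`S_χ(a,b;n;qr) = S_{χ_q}(a r̄, b r̄; n; q) · S_{χ_r}(a q̄, b q̄; n; r)`. -/
theorem kloosterman_crt_factorization (q r : ℕ) [NeZero q] [NeZero r]
    (hqr : Nat.Coprime q r)
    (χ : ZMod (q * r) → ℂ) (χq : ZMod q → ℂ) (χr : ZMod r → ℂ)
    (hmul : ∀ x y : ZMod (q * r), χ (x * y) = χ x * χ y)
    (hfac : ∀ x : ℤ, χ ((x : ZMod (q * r))) = χq ((x : ZMod q)) * χr ((x : ZMod r)))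
    (a b n : ℤ) (hn : n ≠ 0)
    (rb qb : ℤ) (hrb : (r : ℤ) * rb ≡ 1 [ZMOD (q : ℤ)])
    (hqb : (q : ℤ) * qb ≡ 1 [ZMOD (r : ℤ)]) :
    klSum (q * r) χ a b n
      = klSum q χq (a * rb) (b * rb) n * klSum r χr (a * qb) (b * qb) n := by
  classical
  set E := ZMod.chineseRemainder hqr with hE
  -- component description of E
  have hEx : ∀ x : ZMod (q * r),
      E x = (((x.val : ℤ) : ZMod q), ((x.val : ℤ) : ZMod r)) := by
    intro x
    have hx : x = (((x.val : ℤ)) : ZMod (q * r)) := by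
      push_cast
      rw [ZMod.natCast_zmod_val]
    conv_lhs => rw [hx]
    rw [map_intCast]
    rfl
  -- the factored summand lemmas
  set Tq : ZMod q → ZMod q → ℂ := fun x x' =>
    if x * x' = (n : ZMod q) then
      (starRingEnd ℂ) (χq x) * eC q ((a * rb) * (x.val : ℤ) + (b * rb) * (x'.val : ℤ))
    else 0 with hTq
  set Tr : ZMod r → ZMod r → ℂ := fun x x' =>
    if x * x' = (n : ZMod r) then
      (starRingEnd ℂ) (χr x) * eC r ((a * qb) * (x.val : ℤ) + (b * qb) * (x'.val : ℤ))
    else 0 with hTr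
  have key : ∀ x x' : ZMod (q * r),
      (if x * x' = (n : ZMod (q * r)) then
        (starRingEnd ℂ) (χ x) * eC (q * r) (a * (x.val : ℤ) + b * (x'.val : ℤ))
      else 0)
      = Tq (E x).1 (E x').1 * Tr (E x).2 (E x').2 := by
    intro x x'
    have hcond : x * x' = (n : ZMod (q * r)) ↔
        ((E x).1 * (E x').1 = (n : ZMod q) ∧ (E x).2 * (E x').2 = (n : ZMod r)) := by
      rw [← E.injective.eq_iff, map_mul, map_intCast]
      constructor
      · intro h
        exact ⟨congrArg Prod.fst h, congrArg Prod.snd h⟩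
      · intro ⟨h1, h2⟩
        exact Prod.ext h1 h2
    by_cases h : x * x' = (n : ZMod (q * r))
    · obtain ⟨h1, h2⟩ := hcond.mp h
      simp only [hTq, hTr]
      rw [if_pos h, if_pos h1, if_pos h2]
      -- character factorization
      have hx : x = (((x.val : ℤ)) : ZMod (q * r)) := by
        push_cast; rw [ZMod.natCast_zmod_val]
      have hχ : χ x = χq (E x).1 * χr (E x).2 := by
        rw [hEx x]
        conv_lhs => rw [hx]
        exact hfac _
      -- exponential factorization
      have hval1 : (((E x).1.val : ℤ) : ZMod q) = ((x.val : ℤ) : ZMod q) := by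
        rw [hEx]; push_cast; rw [ZMod.natCast_zmod_val]
      have hval1' : (((E x').1.val : ℤ) : ZMod q) = ((x'.val : ℤ) : ZMod q) := by
        rw [hEx]; push_cast; rw [ZMod.natCast_zmod_val]
      have hval2 : (((E x).2.val : ℤ) : ZMod r) = ((x.val : ℤ) : ZMod r) := by
        rw [hEx]; push_cast; rw [ZMod.natCast_zmod_val]
      have hval2' : (((E x').2.val : ℤ) : ZMod r) = ((x'.val : ℤ) : ZMod r) := by
        rw [hEx]; push_cast; rw [ZMod.natCast_zmod_val]
      have hexp : eC (q * r) (a * (x.val : ℤ) + b * (x'.val : ℤ))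
          = eC q ((a * rb) * ((E x).1.val : ℤ) + (b * rb) * ((E x').1.val : ℤ))
          * eC r ((a * qb) * ((E x).2.val : ℤ) + (b * qb) * ((E x').2.val : ℤ)) := by
        push_cast at hval1 hval1' hval2 hval2'
        rw [eC_split q r hqr rb qb hrb hqb]
        congr 1
        · apply eC_congr
          push_cast
          rw [hval1, hval1']
          push_cast
          ring
        · apply eC_congr
          push_cast
          rw [hval2, hval2']
          push_cast
          ring
      rw [hχ, hexp, map_mul]
      ring
    · rw [if_neg h]
      rcases (not_and_or.mp (fun hc => h (hcond.mpr hc))) with h1 | h1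
      · simp only [hTq]; rw [if_neg h1]; simp
      · simp only [hTr]; rw [if_neg h1]; simp
  -- put it together
  rw [klSum_eq, klSum_eq, klSum_eq]
  calc (∑ x : ZMod (q * r), ∑ x' : ZMod (q * r),
        if x * x' = (n : ZMod (q * r)) then
          (starRingEnd ℂ) (χ x) * eC (q * r) (a * (x.val : ℤ) + b * (x'.val : ℤ))
        else 0)
      = ∑ x : ZMod (q * r), ∑ x' : ZMod (q * r), Tq (E x).1 (E x').1 * Tr (E x).2 (E x').2 := by
        exact Finset.sum_congr rfl fun x _ => Finset.sum_congr rfl fun x' _ => key x x'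
    _ = ∑ y : ZMod q × ZMod r, ∑ y' : ZMod q × ZMod r, Tq y.1 y'.1 * Tr y.2 y'.2 := by
        refine Fintype.sum_equiv E.toEquiv
          (fun x => ∑ x' : ZMod (q * r), Tq (E x).1 (E x').1 * Tr (E x).2 (E x').2)
          (fun y => ∑ y' : ZMod q × ZMod r, Tq y.1 y'.1 * Tr y.2 y'.2) fun x => ?_
        exact Fintype.sum_equiv E.toEquiv
          (fun x' => Tq (E x).1 (E x').1 * Tr (E x).2 (E x').2)
          (fun y' => Tq (E.toEquiv x).1 y'.1 * Tr (E.toEquiv x).2 y'.2) fun x' => rfl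
    _ = (∑ y₁ : ZMod q, ∑ y₁' : ZMod q, Tq y₁ y₁')
        * (∑ y₂ : ZMod r, ∑ y₂' : ZMod r, Tr y₂ y₂') := by
        simp only [Fintype.sum_prod_type, ← Finset.sum_mul, ← Finset.mul_sum]
end

section
/- Fix a positive integer n and a divisor a of nm (m also a positive integer). Let D(a) = {(d,c) : dc = a, d | n, c | m} and D'(a) = {(ℓ,r) : ℓr = a, ℓ | gcd(n,m), r | nm/ℓ²}. Then the map (d,c) ↦ (gcd(n,a)/d, a·d/gcd(n,a)) is a bijection from D(a) to D'(a), with inverse (ℓ,r) ↦ (gcd(n,a)/ℓ, a·ℓ/gcd(n,a)). -/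
private lemma my_div_dvd_div {a b c : ℕ} (hc : c ∣ a) (hab : a ∣ b) : a / c ∣ b / c := by
  rcases Nat.eq_zero_or_pos c with h | h
  · simp [h]
  · obtain ⟨a', rfl⟩ := hc
    obtain ⟨k, rfl⟩ := hab
    rw [Nat.mul_div_cancel_left _ h, Nat.mul_assoc, Nat.mul_div_cancel_left _ h]
    exact ⟨k, rfl⟩

/-- The divisor-pair bijection: for `a ∣ nm`, the map
`(d,c) ↦ (gcd(n,a)/d, a·d/gcd(n,a))` is a bijection from
`D(a) = {(d,c) : dc = a, d ∣ n, c ∣ m}` onto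
`D'(a) = {(ℓ,r) : ℓr = a, ℓ ∣ gcd(n,m), r ∣ nm/ℓ²}`, and the map
`(ℓ,r) ↦ (gcd(n,a)/ℓ, a·ℓ/gcd(n,a))` (the same formula) is its inverse. -/
theorem divisor_pair_bijection (n m a : ℕ) (hn : 0 < n) (hm : 0 < m) (ha : a ∣ n * m) :
    Set.BijOn (fun p : ℕ × ℕ => (Nat.gcd n a / p.1, a * p.1 / Nat.gcd n a))
        {p : ℕ × ℕ | p.1 * p.2 = a ∧ p.1 ∣ n ∧ p.2 ∣ m}
        {p : ℕ × ℕ | p.1 * p.2 = a ∧ p.1 ∣ Nat.gcd n m ∧ p.2 ∣ n * m / p.1 ^ 2} ∧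
    Set.InvOn (fun p : ℕ × ℕ => (Nat.gcd n a / p.1, a * p.1 / Nat.gcd n a))
        (fun p : ℕ × ℕ => (Nat.gcd n a / p.1, a * p.1 / Nat.gcd n a))
        {p : ℕ × ℕ | p.1 * p.2 = a ∧ p.1 ∣ n ∧ p.2 ∣ m}
        {p : ℕ × ℕ | p.1 * p.2 = a ∧ p.1 ∣ Nat.gcd n m ∧ p.2 ∣ n * m / p.1 ^ 2} := by
  have hnm : 0 < n * m := Nat.mul_pos hn hm
  have ha0 : a ≠ 0 := by rintro rfl; exact absurd (Nat.eq_zero_of_zero_dvd ha) hnm.ne'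
  set g := Nat.gcd n a with hg
  have hg0 : 0 < g := Nat.gcd_pos_of_pos_right n (Nat.pos_of_ne_zero ha0)
  -- f ∘ f = id on points with p.1 ∣ n and p.1 * p.2 = a
  have key : ∀ p : ℕ × ℕ, p.1 ∣ n → p.1 * p.2 = a →
      (g / (g / p.1), a * (g / p.1) / g) = p := by
    rintro ⟨d, c⟩ hdn hdc
    simp only at hdn hdc
    have hd0 : 0 < d := Nat.pos_of_ne_zero (by rintro rfl; simp at hdc; exact ha0 hdc.symm)
    have hda : d ∣ a := Dvd.intro c hdc
    have hdg : d ∣ g := Nat.dvd_gcd hdn hda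
    have h1 : g / (g / d) = d := Nat.div_div_self hdg hg0.ne'
    have h2 : a * (g / d) / g = c := by
      rw [← Nat.mul_div_assoc a hdg, Nat.div_div_eq_div_mul, Nat.mul_comm d g,
        ← Nat.div_div_eq_div_mul, Nat.mul_div_cancel _ hg0, ← hdc,
        Nat.mul_div_cancel_left _ hd0]
    simp [h1, h2]
  -- forward maps-to
  have mt1 : Set.MapsTo (fun p : ℕ × ℕ => (g / p.1, a * p.1 / g))
      {p : ℕ × ℕ | p.1 * p.2 = a ∧ p.1 ∣ n ∧ p.2 ∣ m}
      {p : ℕ × ℕ | p.1 * p.2 = a ∧ p.1 ∣ Nat.gcd n m ∧ p.2 ∣ n * m / p.1 ^ 2} := by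
    rintro ⟨d, c⟩ ⟨hdc, hdn, hcm⟩
    simp only at hdc hdn hcm
    have hd0 : 0 < d := Nat.pos_of_ne_zero (by rintro rfl; simp at hdc; exact ha0 hdc.symm)
    have hc0 : 0 < c := Nat.pos_of_ne_zero (by rintro rfl; simp at hdc; exact ha0 hdc.symm)
    set e := Nat.gcd (n / d) c with he
    have he0 : 0 < e := Nat.gcd_pos_of_pos_right _ hc0
    have hge : g = d * e := by
      rw [hg, ← hdc, he, ← Nat.gcd_mul_left, Nat.mul_div_cancel' hdn]
    have hgd : g / d = e := by rw [hge, Nat.mul_div_cancel_left _ hd0]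
    have har : a * d / g = c * d / e := by
      rw [← hdc, hge, show d * c * d = d * (c * d) by ring, Nat.mul_div_mul_left _ _ hd0]
    have hec : e ∣ c := Nat.gcd_dvd_right _ _
    have hend : e ∣ n / d := Nat.gcd_dvd_left _ _
    have hde_n : d * e ∣ n := by
      obtain ⟨k, hk⟩ := hend
      exact ⟨k, by rw [Nat.mul_assoc, ← hk, Nat.mul_div_cancel' hdn]⟩
    refine ⟨?_, ?_, ?_⟩
    · show g / d * (a * d / g) = a
      rw [hgd, har, Nat.mul_div_cancel' (hec.mul_right d), Nat.mul_comm]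
      exact hdc
    · show g / d ∣ Nat.gcd n m
      rw [hgd]
      exact Nat.dvd_gcd (hend.trans (Nat.div_dvd_of_dvd hdn)) (hec.trans hcm)
    · show a * d / g ∣ n * m / (g / d) ^ 2
      rw [hgd, har, sq]
      have h1 : c * d * e ∣ n * m := by
        calc c * d * e = d * e * c := by ring
        _ ∣ n * m := Nat.mul_dvd_mul hde_n hcm
      have h2 : e * e ∣ c * d * e := Nat.mul_dvd_mul (hec.mul_right d) dvd_rfl
      have := my_div_dvd_div h2 h1
      rwa [Nat.mul_div_mul_right _ _ he0] at this
  -- backward maps-to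
  have mt2 : Set.MapsTo (fun p : ℕ × ℕ => (g / p.1, a * p.1 / g))
      {p : ℕ × ℕ | p.1 * p.2 = a ∧ p.1 ∣ Nat.gcd n m ∧ p.2 ∣ n * m / p.1 ^ 2}
      {p : ℕ × ℕ | p.1 * p.2 = a ∧ p.1 ∣ n ∧ p.2 ∣ m} := by
    rintro ⟨l, r⟩ ⟨hlr, hlg, hrd⟩
    simp only at hlr hlg hrd
    have hl0 : 0 < l := Nat.pos_of_ne_zero (by rintro rfl; simp at hlr; exact ha0 hlr.symm)
    have hr0 : 0 < r := Nat.pos_of_ne_zero (by rintro rfl; simp at hlr; exact ha0 hlr.symm)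
    have hln : l ∣ n := hlg.trans (Nat.gcd_dvd_left _ _)
    have hlm : l ∣ m := hlg.trans (Nat.gcd_dvd_right _ _)
    set e := Nat.gcd (n / l) r with he
    have he0 : 0 < e := Nat.gcd_pos_of_pos_right _ hr0
    have hge : g = l * e := by
      rw [hg, ← hlr, he, ← Nat.gcd_mul_left, Nat.mul_div_cancel' hln]
    have hgl : g / l = e := by rw [hge, Nat.mul_div_cancel_left _ hl0]
    have har : a * l / g = r * l / e := by
      rw [← hlr, hge, show l * r * l = l * (r * l) by ring, Nat.mul_div_mul_left _ _ hl0]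
    have her : e ∣ r := Nat.gcd_dvd_right _ _
    have hen : e ∣ n / l := Nat.gcd_dvd_left _ _
    refine ⟨?_, ?_, ?_⟩
    · show g / l * (a * l / g) = a
      rw [hgl, har, Nat.mul_div_cancel' (her.mul_right l), Nat.mul_comm]
      exact hlr
    · show g / l ∣ n
      rw [hgl]
      exact hen.trans (Nat.div_dvd_of_dvd hln)
    · show a * l / g ∣ m
      rw [har]
      have hsplit : n * m / l ^ 2 = n / l * (m / l) := by
        rw [sq, ← Nat.div_mul_div_comm hln hlm]
      rw [hsplit] at hrd
      have hcop : Nat.Coprime (n / l / e) (r / e) :=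
        Nat.coprime_div_gcd_div_gcd (Nat.gcd_pos_of_pos_right _ hr0)
      have hre : r / e ∣ n / l / e * (m / l) := by
        have h1 : r / e ∣ (n / l * (m / l)) / e := my_div_dvd_div her hrd
        rwa [Nat.mul_comm (n / l) (m / l), Nat.mul_div_assoc _ hen,
          Nat.mul_comm (m / l)] at h1
      have hml : r / e ∣ m / l := (hcop.symm).dvd_of_dvd_mul_left hre
      rw [Nat.mul_comm r l, Nat.mul_div_assoc l her]
      exact (Nat.mul_dvd_mul_left l hml).trans (Nat.mul_div_cancel' hlm).dvd
  have hinv : Set.InvOn (fun p : ℕ × ℕ => (g / p.1, a * p.1 / g))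
      (fun p : ℕ × ℕ => (g / p.1, a * p.1 / g))
      {p : ℕ × ℕ | p.1 * p.2 = a ∧ p.1 ∣ n ∧ p.2 ∣ m}
      {p : ℕ × ℕ | p.1 * p.2 = a ∧ p.1 ∣ Nat.gcd n m ∧ p.2 ∣ n * m / p.1 ^ 2} :=
    ⟨fun p hp => key p hp.2.1 hp.1,
     fun p hp => key p (hp.2.1.trans (Nat.gcd_dvd_left n m)) hp.1⟩
  exact ⟨hinv.bijOn mt1 mt2, hinv⟩
end
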